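/- arXiv:1310.5083 — 2 statements merged into one kernel-verified Lean document; each statement's English description precedes it below -/
import Mathlib

section
/- The continuous function g defined by g(0) = 0, g(x) = −1/log x for x ∈ (0,1/2], and g(x) = 1/log 2 for x ∈ [1/2,1] satisfies g(0) = 0 but lim_{ε→0⁺} ∫_ε^{1/2} g(t)/t dt = +∞; consequently g does not belong to the range of I − C on C([0,1]), and hence the range of I − C is not closed in C([0,1]). -/
open MeasureTheory

/-- The Cesàro average: `ces f x = (1/x) ∫₀ˣ f(t) dt` for `x ≠ 0`, `ces f 0 = f 0`. -/
noncomputable def ces (f : ℝ → ℂ) (x : ℝ) : ℂ :=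
  if x = 0 then f 0 else (∫ t in (0:ℝ)..x, f t) / (x : ℂ)

/-!
Since `(I - C) tⁿ⁺¹ = (n + 1) / (n + 2) · tⁿ⁺¹`, every polynomial vanishing at `0` lies in the
range of `I - C`, and by Weierstrass these are dense among the continuous functions vanishing
at `0`; so `g` is in the closure of the range.

Conversely, if `(I - C) f = g` and `F x = ∫₀ˣ f`, then `(F x / x)' = (f x - C f x) / x = g x / x`,
so `∫_ε^b g t / t dt = C f b - C f ε`, which converges as `ε → 0⁺` because `C f ε → f 0`.
For this `g`, however, `-1 / (t log t)` has antiderivative `-log (-log t)`, so the integral is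
`log (-log ε) - log (log 2) → ∞`.
-/

open Real Set Filter Topology Polynomial

theorem continuousAt_neg_one_div_log {x : ℝ} (h₁ : x ≠ 1) (h₂ : x ≠ -1) :
    ContinuousAt (fun t => -1 / log t) x := by
  rcases eq_or_ne x 0 with rfl | h₀
  · -- `log 0 = 0` and `a / 0 = 0` make the value at `0` the limit `0`
    rw [← continuousWithinAt_compl_self, ContinuousWithinAt, log_zero, div_zero]
    simp only [neg_div, one_div]
    simpa using tendsto_log_nhdsNE_zero.inv_tendsto_atBot.neg
  · exact continuousAt_const.div (continuousAt_log h₀) (log_ne_zero.2 ⟨h₀, h₁, h₂⟩)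

theorem integral_neg_one_div_log_div {a b : ℝ} (ha : a ∈ Ioo 0 1) (hb : b ∈ Ioo 0 1) :
    ∫ t in a..b, -1 / log t / t = log (-log a) - log (-log b) := by
  have hsub : uIcc a b ⊆ Ioo 0 1 := ordConnected_Ioo.uIcc_subset ha hb
  have hderiv : ∀ t ∈ uIcc a b, HasDerivAt (fun u => -log (-log u)) (-1 / log t / t) t := by
    intro t ht
    obtain ⟨h0, h1⟩ := hsub ht
    have hlog : log t < 0 := log_neg h0 h1
    have hneglog : HasDerivAt (fun u => -log u) (-t⁻¹) t := (hasDerivAt_log h0.ne').neg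
    refine (hneglog.log (by linarith)).neg.congr_deriv ?_
    field_simp
  have hcont : ContinuousOn (fun t => -1 / log t / t) (uIcc a b) := fun t ht =>
    have ht' := hsub ht
    ((continuousAt_neg_one_div_log (ht'.2.ne) (by linarith [ht'.1])).div continuousAt_id
      ht'.1.ne').continuousWithinAt
  rw [intervalIntegral.integral_eq_sub_of_hasDerivAt hderiv hcont.intervalIntegrable]
  ring

theorem tendsto_integral_neg_one_div_log_div_atTop {b : ℝ} (hb : b ∈ Ioo 0 1) :
    Tendsto (fun ε => ∫ t in ε..b, -1 / log t / t) (𝓝[>] 0) atTop := by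
  have hlim : Tendsto (fun ε => log (-log ε) - log (-log b)) (𝓝[>] 0) atTop :=
    tendsto_atTop_add_const_right _ _
      (tendsto_log_atTop.comp (tendsto_neg_atBot_atTop.comp tendsto_log_nhdsGT_zero))
  refine hlim.congr' ?_
  filter_upwards [Ioo_mem_nhdsGT (zero_lt_one' ℝ)] with ε hε
  exact (integral_neg_one_div_log_div hε hb).symm

theorem continuousOn_of_eq_neg_one_div_log {g : ℝ → ℂ} (hg0 : g 0 = 0)
    (hg1 : ∀ x ∈ Ioc (0:ℝ) (1/2), g x = ((-1 / log x : ℝ) : ℂ))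
    (hg2 : ∀ x ∈ Icc (1/2 : ℝ) 1, g x = ((1 / log 2 : ℝ) : ℂ)) :
    ContinuousOn g (Icc 0 1) := by
  have hleft : ContinuousOn g (Icc 0 (1/2)) := by
    refine ContinuousOn.congr (f := fun x => ((-1 / log x : ℝ) : ℂ)) (fun x hx => ?_) fun x hx => ?_
    · exact (Complex.continuous_ofReal.continuousAt.comp
        (continuousAt_neg_one_div_log (by linarith [hx.2]) (by linarith [hx.1]))).continuousWithinAt
    · rcases hx.1.eq_or_lt with rfl | hx0
      · simp [hg0]
      · exact hg1 x ⟨hx0, hx.2⟩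
  have hright : ContinuousOn g (Icc (1/2) 1) := continuousOn_const.congr hg2
  rw [← Icc_union_Icc_eq_Icc (by norm_num : (0:ℝ) ≤ 1/2) (by norm_num)]
  exact hleft.union_of_isClosed hright isClosed_Icc isClosed_Icc

theorem exists_complex_polynomial_near_of_continuousOn (a b : ℝ) {g : ℝ → ℂ}
    (hg : ContinuousOn g (Icc a b)) {ε : ℝ} (hε : 0 < ε) :
    ∃ P : ℂ[X], ∀ x ∈ Icc a b, ‖P.eval (x : ℂ) - g x‖ < ε := by
  obtain ⟨p, hp⟩ := exists_polynomial_near_of_continuousOn a b (fun x => (g x).re)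
    (Complex.continuous_re.comp_continuousOn hg) (ε / 2) (half_pos hε)
  obtain ⟨q, hq⟩ := exists_polynomial_near_of_continuousOn a b (fun x => (g x).im)
    (Complex.continuous_im.comp_continuousOn hg) (ε / 2) (half_pos hε)
  refine ⟨p.map (algebraMap ℝ ℂ) + C Complex.I * q.map (algebraMap ℝ ℂ), fun x hx => ?_⟩
  have heval : (p.map (algebraMap ℝ ℂ) + C Complex.I * q.map (algebraMap ℝ ℂ)).eval (x : ℂ)
      = ((p.eval x : ℝ) : ℂ) + Complex.I * ((q.eval x : ℝ) : ℂ) := by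
    simp only [eval_add, eval_mul, eval_C, eval_map_algebraMap]
    exact congr_arg₂ _ (aeval_algebraMap_apply_eq_algebraMap_eval x p)
      (congrArg _ (aeval_algebraMap_apply_eq_algebraMap_eval x q))
  calc _ ≤ |p.eval x - (g x).re| + |q.eval x - (g x).im| := by
        simpa [heval] using Complex.norm_le_abs_re_add_abs_im
          (((p.eval x : ℝ) : ℂ) + Complex.I * ((q.eval x : ℝ) : ℂ) - g x)
    _ < ε / 2 + ε / 2 := add_lt_add (hp x hx) (hq x hx)
    _ = ε := add_halves ε

theorem ces_add {f g : ℝ → ℂ} (hf : Continuous f) (hg : Continuous g) (x : ℝ) :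
    ces (fun t => f t + g t) x = ces f x + ces g x := by
  unfold ces
  split_ifs
  · rfl
  · rw [intervalIntegral.integral_add (hf.intervalIntegrable _ _) (hg.intervalIntegrable _ _),
      add_div]

theorem ces_const_mul_pow (c : ℂ) (n : ℕ) (x : ℝ) :
    ces (fun t => c * (t : ℂ) ^ n) x = c * (x : ℂ) ^ n / (n + 1) := by
  unfold ces
  split_ifs with hx
  · subst hx
    cases n <;> simp
  · have hx' : (x : ℂ) ≠ 0 := Complex.ofReal_ne_zero.2 hx
    have hint : ∫ t in (0:ℝ)..x, (t : ℂ) ^ n = (x : ℂ) ^ (n + 1) / (n + 1) := by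
      simp_rw [← Complex.ofReal_pow]
      rw [intervalIntegral.integral_ofReal, integral_pow]
      push_cast
      ring
    rw [intervalIntegral.integral_const_mul, hint]
    field_simp
    ring

theorem exists_continuous_sub_ces_eq_eval (P : ℂ[X]) (hP : P.eval 0 = 0) :
    ∃ f : ℝ → ℂ, Continuous f ∧ ∀ x : ℝ, f x - ces f x = P.eval (x : ℂ) := by
  obtain ⟨Q, rfl⟩ : X ∣ P := X_dvd_iff.2 (by rwa [coeff_zero_eq_eval_zero])
  induction Q using Polynomial.induction_on' with
  | add Q R hQ hR =>
    obtain ⟨f, hf, hfQ⟩ := hQ (by simp)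
    obtain ⟨g, hg, hgR⟩ := hR (by simp)
    refine ⟨fun t => f t + g t, hf.add hg, fun x => ?_⟩
    rw [ces_add hf hg, mul_add, eval_add, ← hfQ, ← hgR]
    ring
  | monomial n a =>
    refine ⟨fun t => a * (n + 2) / (n + 1) * (t : ℂ) ^ (n + 1), by fun_prop, fun x => ?_⟩
    rw [ces_const_mul_pow]
    simp only [eval_mul, eval_X, eval_monomial]
    push_cast
    have h1 : (n : ℂ) + 1 ≠ 0 := Nat.cast_add_one_ne_zero n
    have h2 : (n : ℂ) + 1 + 1 ≠ 0 := by exact_mod_cast (n + 1).succ_ne_zero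
    field_simp
    ring

theorem exists_sub_ces_near {g : ℝ → ℂ} (hg : ContinuousOn g (Icc 0 1)) (hg0 : g 0 = 0)
    {ε : ℝ} (hε : 0 < ε) :
    ∃ f : ℝ → ℂ, ContinuousOn f (Icc 0 1) ∧ ∀ x ∈ Icc (0:ℝ) 1, ‖g x - (f x - ces f x)‖ < ε := by
  obtain ⟨P, hP⟩ := exists_complex_polynomial_near_of_continuousOn 0 1 hg (half_pos hε)
  have hP0 : ‖P.eval 0‖ < ε / 2 := by
    simpa [hg0] using hP 0 (left_mem_Icc.2 zero_le_one)
  obtain ⟨f, hf, hfP⟩ := exists_continuous_sub_ces_eq_eval (P - C (P.eval 0)) (by simp)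
  refine ⟨f, hf.continuousOn, fun x hx => ?_⟩
  calc ‖g x - (f x - ces f x)‖ = ‖-(P.eval (x : ℂ) - g x) + P.eval 0‖ := by
        rw [hfP, eval_sub, eval_C]; congr 1; ring
    _ ≤ ‖P.eval (x : ℂ) - g x‖ + ‖P.eval 0‖ := (norm_add_le _ _).trans_eq (by rw [norm_neg])
    _ < ε / 2 + ε / 2 := add_lt_add (hP x hx) hP0
    _ = ε := add_halves ε

theorem tendsto_ces_nhdsGT_zero {f : ℝ → ℂ} (hf : ContinuousOn f (Icc 0 1)) :
    Tendsto (ces f) (𝓝[>] 0) (𝓝 (f 0)) := by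
  have hIcc : Icc (0:ℝ) 1 ∈ 𝓝[>] 0 :=
    mem_of_superset (Ioo_mem_nhdsGT zero_lt_one) Ioo_subset_Icc_self
  have hderiv : HasDerivWithinAt (fun x => ∫ t in (0:ℝ)..x, f t) (f 0) (Ici 0) 0 :=
    intervalIntegral.integral_hasDerivWithinAt_right (t := Ioi 0) .refl
      ((hf.stronglyMeasurableAtFilter_nhdsWithin measurableSet_Icc 0).filter_mono
        (nhdsWithin_le_of_mem hIcc))
      ((hf 0 (left_mem_Icc.2 zero_le_one)).mono_of_mem_nhdsWithin hIcc)
  rw [hasDerivWithinAt_iff_tendsto_slope, Ici_sdiff_left] at hderiv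
  refine hderiv.congr' ?_
  filter_upwards [self_mem_nhdsWithin] with x (hx : 0 < x)
  simp [slope_def_module, ces, hx.ne', div_eq_inv_mul]

theorem hasDerivAt_integral_div {f : ℝ → ℂ} (hf : ContinuousOn f (Icc 0 1)) {x : ℝ}
    (hx : x ∈ Ioo 0 1) :
    HasDerivAt (fun y => (∫ t in (0:ℝ)..y, f t) / (y : ℂ)) ((f x - ces f x) / x) x := by
  have hF : HasDerivAt (fun y => ∫ t in (0:ℝ)..y, f t) (f x) x :=
    intervalIntegral.integral_hasDerivAt_right
      ((hf.mono (uIcc_of_le hx.1.le ▸ Icc_subset_Icc_right hx.2.le)).intervalIntegrable)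
      ((hf.mono Ioo_subset_Icc_self).stronglyMeasurableAtFilter isOpen_Ioo x hx)
      (hf.continuousAt (Icc_mem_nhds hx.1 hx.2))
  have hx0 : (x : ℂ) ≠ 0 := Complex.ofReal_ne_zero.2 hx.1.ne'
  refine (hF.div (hasDerivAt_id x).ofReal_comp hx0).congr_deriv ?_
  simp only [ces, hx.1.ne', if_false, id, Complex.ofReal_one]
  field_simp

theorem intervalIntegrable_div_ofReal {g : ℝ → ℂ} (hg : ContinuousOn g (Ioo 0 1)) {a b : ℝ}
    (ha : a ∈ Ioo 0 1) (hb : b ∈ Ioo 0 1) :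
    IntervalIntegrable (fun t => g t / (t : ℂ)) volume a b := by
  have hsub : uIcc a b ⊆ Ioo 0 1 := ordConnected_Ioo.uIcc_subset ha hb
  exact ((hg.mono hsub).div Complex.continuous_ofReal.continuousOn
    fun t ht => Complex.ofReal_ne_zero.2 (hsub ht).1.ne').intervalIntegrable

theorem tendsto_integral_div_of_sub_ces_eq {f g : ℝ → ℂ} (hf : ContinuousOn f (Icc 0 1))
    (hg : ContinuousOn g (Ioo 0 1)) (hfg : ∀ x ∈ Ioo (0:ℝ) 1, f x - ces f x = g x)
    {b : ℝ} (hb : b ∈ Ioo 0 1) :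
    Tendsto (fun ε => ∫ t in ε..b, g t / (t : ℂ)) (𝓝[>] 0) (𝓝 (ces f b - f 0)) := by
  refine (tendsto_const_nhds.sub (tendsto_ces_nhdsGT_zero hf)).congr' ?_
  filter_upwards [Ioo_mem_nhdsGT (zero_lt_one' ℝ)] with ε hε
  have hderiv : ∀ t ∈ uIcc ε b,
      HasDerivAt (fun y => (∫ t in (0:ℝ)..y, f t) / (y : ℂ)) (g t / t) t := fun t ht => by
    have ht' := ordConnected_Ioo.uIcc_subset hε hb ht
    exact hfg t ht' ▸ hasDerivAt_integral_div hf ht'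
  rw [intervalIntegral.integral_eq_sub_of_hasDerivAt hderiv
    (intervalIntegrable_div_ofReal hg hε hb)]
  simp [ces, hε.1.ne', hb.1.ne']

theorem not_exists_sub_ces_eq_of_tendsto_atTop {g : ℝ → ℂ} (hg : ContinuousOn g (Icc 0 1))
    {b : ℝ} (hb : b ∈ Ioo 0 1)
    (hdiv : Tendsto (fun ε => ∫ t in ε..b, (g t / (t : ℂ)).re) (𝓝[>] 0) atTop) :
    ¬ ∃ f : ℝ → ℂ, ContinuousOn f (Icc 0 1) ∧ ∀ x ∈ Icc (0:ℝ) 1, f x - ces f x = g x := by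
  rintro ⟨f, hf, hfg⟩
  have hg' := hg.mono Ioo_subset_Icc_self
  have hlim := (Complex.continuous_re.tendsto _).comp (tendsto_integral_div_of_sub_ces_eq hf hg'
    (fun x hx => hfg x (Ioo_subset_Icc_self hx)) hb)
  refine not_tendsto_atTop_of_tendsto_nhds (hlim.congr' ?_) hdiv
  filter_upwards [Ioo_mem_nhdsGT (zero_lt_one' ℝ)] with ε hε
  exact (intervalIntegral.intervalIntegral_re (intervalIntegrable_div_ofReal hg' hε hb)).symm

/-- The function `g` with `g 0 = 0`, `g x = -1/log x` on `(0,1/2]`, `g x = 1/log 2` on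
`[1/2,1]` is continuous on `[0,1]`, vanishes at `0`, has divergent integral
`∫_ε^{1/2} g(t)/t dt → +∞`; it lies in the closure of the range of `I - C` but not in the
range itself, so the range of `I - C` is not closed in `C([0,1])`. -/
theorem cesaro_range_not_closed (g : ℝ → ℂ)
    (hg0 : g 0 = 0)
    (hg1 : ∀ x ∈ Set.Ioc (0:ℝ) (1/2), g x = ((-1 / Real.log x : ℝ) : ℂ))
    (hg2 : ∀ x ∈ Set.Icc (1/2 : ℝ) 1, g x = ((1 / Real.log 2 : ℝ) : ℂ)) :
    ContinuousOn g (Set.Icc 0 1) ∧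
    Filter.Tendsto (fun ε : ℝ => ∫ t in ε..(1/2 : ℝ), (g t / (t : ℂ)).re)
      (nhdsWithin 0 (Set.Ioi 0)) Filter.atTop ∧
    (∀ ε > (0:ℝ), ∃ f : ℝ → ℂ, ContinuousOn f (Set.Icc 0 1) ∧
      ∀ x ∈ Set.Icc (0:ℝ) 1, ‖g x - (f x - ces f x)‖ < ε) ∧
    ¬ ∃ f : ℝ → ℂ, ContinuousOn f (Set.Icc 0 1) ∧
      ∀ x ∈ Set.Icc (0:ℝ) 1, f x - ces f x = g x := by
  have hhalf : (1/2 : ℝ) ∈ Ioo 0 1 := by norm_num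
  have hcont := continuousOn_of_eq_neg_one_div_log hg0 hg1 hg2
  have hdiv : Tendsto (fun ε : ℝ => ∫ t in ε..(1/2 : ℝ), (g t / (t : ℂ)).re) (𝓝[>] 0) atTop := by
    refine (tendsto_integral_neg_one_div_log_div_atTop hhalf).congr' ?_
    filter_upwards [Ioo_mem_nhdsGT hhalf.1] with ε hε
    refine intervalIntegral.integral_congr fun t ht => ?_
    rw [uIcc_of_le hε.2.le] at ht
    rw [hg1 t ⟨hε.1.trans_le ht.1, ht.2⟩, ← Complex.ofReal_div, Complex.ofReal_re]
  exact ⟨hcont, hdiv, fun ε hε => exists_sub_ces_near hcont hg0 hε,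
    not_exists_sub_ces_eq_of_tendsto_atTop hcont hhalf hdiv⟩
end

section
/- The closure of the range of I − C on C_l([0,∞]) equals {f ∈ C_l([0,∞]) : f(0) = f(∞) = 0}. -/
/-!
For `x > 0` we have `C f (x) = ∫₀¹ f(x s) ds`, so by dominated convergence `C` preserves limits
at infinity; together with `C f (0) = f (0)` this shows that every `f - C f` vanishes at `0` and
at `∞`, hence so does every uniform limit of such functions.

Conversely, multiplying `g` by a bump function gives a continuous `G`, supported in a compact
subset of `(0, ∞)`, uniformly `ε`-close to `g`. Then `f x = G x + ∫₀ˣ G(t)/t dt` is eventually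
constant and solves `f - C f = G`: integration by parts gives `∫₀ˣ f = x ∫₀ˣ G(t)/t dt`.
-/

open MeasureTheory

open Filter Topology

lemma ces_zero (f : ℝ → ℂ) : ces f 0 = f 0 := if_pos rfl

lemma ces_eq_integral_comp_mul (f : ℝ → ℂ) {x : ℝ} (hx : x ≠ 0) :
    ces f x = ∫ s in (0:ℝ)..1, f (x * s) := by
  rw [ces, if_neg hx, intervalIntegral.integral_comp_mul_left _ hx, mul_zero, mul_one,
    Complex.real_smul, Complex.ofReal_inv, div_eq_inv_mul]

lemma ContinuousOn.exists_norm_le_of_tendsto_atTop {E : Type*} [NormedAddCommGroup E]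
    {f : ℝ → E} {a : ℝ} {M : E} (hf : ContinuousOn f (Set.Ici a)) (hM : Tendsto f atTop (𝓝 M)) :
    ∃ B, ∀ x ≥ a, ‖f x‖ ≤ B := by
  obtain ⟨A, hA⟩ :=
    eventually_atTop.mp (hM.norm.eventually (eventually_le_nhds (lt_add_one ‖M‖)))
  obtain ⟨B, hB⟩ := isCompact_Icc.exists_bound_of_continuousOn
    (hf.mono (Set.Icc_subset_Ici_self : Set.Icc a A ⊆ _))
  refine ⟨max B (‖M‖ + 1), fun x hx => ?_⟩
  rcases le_total x A with hxA | hxA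
  · exact (hB x ⟨hx, hxA⟩).trans (le_max_left _ _)
  · exact (hA x hxA).trans (le_max_right _ _)

lemma tendsto_ces_atTop {f : ℝ → ℂ} {M : ℂ} (hf : ContinuousOn f (Set.Ici 0))
    (hM : Tendsto f atTop (𝓝 M)) : Tendsto (ces f) atTop (𝓝 M) := by
  obtain ⟨B, hB⟩ := hf.exists_norm_le_of_tendsto_atTop hM
  have hlim : Tendsto (fun x => ∫ s in (0:ℝ)..1, f (x * s)) atTop
      (𝓝 (∫ _ in (0:ℝ)..1, M)) := by
    refine intervalIntegral.tendsto_integral_filter_of_dominated_convergence (fun _ => B) ?_ ?_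
      intervalIntegrable_const ?_
    · filter_upwards [eventually_ge_atTop 0] with x hx
      refine ContinuousOn.aestronglyMeasurable ?_ measurableSet_uIoc
      exact hf.comp (continuousOn_const.mul continuousOn_id)
        fun s hs => mul_nonneg hx (le_of_lt (by simpa using hs.1))
    · filter_upwards [eventually_ge_atTop 0] with x hx
      exact ae_of_all _ fun s hs => hB _ (mul_nonneg hx (le_of_lt (by simpa using hs.1)))
    · exact ae_of_all _ fun s hs => hM.comp (tendsto_id.atTop_mul_const (by simpa using hs.1))
  rw [intervalIntegral.integral_const, sub_zero, one_smul] at hlim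
  refine hlim.congr' ?_
  filter_upwards [eventually_gt_atTop 0] with x hx
  exact (ces_eq_integral_comp_mul f hx.ne').symm

lemma exists_cutoff_approx {g : ℝ → ℂ} (hg : ContinuousOn g (Set.Ici 0)) (hg0 : g 0 = 0)
    (hlim : Tendsto g atTop (𝓝 0)) {ε : ℝ} (hε : 0 < ε) :
    ∃ G : ℝ → ℂ, Continuous G ∧ G =ᶠ[𝓝 0] 0 ∧ (∃ b, ∀ t ≥ b, G t = 0) ∧
      ∀ x ≥ 0, ‖g x - G x‖ < ε := by
  have hnear : ∀ᶠ x in 𝓝[≥] 0, ‖g x‖ < ε := by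
    have := (hg 0 Set.self_mem_Ici).norm
    simp only [ContinuousWithinAt, hg0, norm_zero] at this
    exact this.eventually (gt_mem_nhds hε)
  obtain ⟨d, hd : 0 < d, hsmall⟩ := mem_nhdsGE_iff_exists_Ico_subset.mp hnear
  obtain ⟨N, hlarge⟩ : ∃ N, ∀ x ≥ N, ‖g x‖ < ε := by
    rw [← norm_zero (E := ℂ)] at hε
    exact eventually_atTop.mp (hlim.norm.eventually (gt_mem_nhds hε))
  set R := max N d
  have hR : 0 < R := lt_max_of_lt_right hd
  -- `φ = 1` on `[d, 2R + d] ⊇ [d, N]` and `φ = 0` outside `(d/2, 2R + 3d/2)`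
  let φ : ContDiffBump (R + d) := ⟨R, R + d / 2, hR, by linarith⟩
  have hφ1 : ∀ x, d ≤ x → x ≤ N → φ x = 1 := fun x h1 h2 => φ.one_of_mem_closedBall <| by
    change x ∈ Metric.closedBall (R + d) R
    rw [Real.closedBall_eq_Icc]; constructor <;> linarith [le_max_left N d]
  have hφ0 : ∀ x, R + d / 2 ≤ |x - (R + d)| → φ x = 0 := fun x hx => φ.zero_of_le_dist hx
  -- `g` is only continuous on `[0, ∞)`; clamping the argument makes `G` continuous on `ℝ`
  let G : ℝ → ℂ := fun t => φ t • g (max t 0)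
  refine ⟨G, φ.continuous.smul (hg.comp_continuous (continuous_id.max continuous_const)
    fun x => le_max_right x 0), ?_, ⟨2 * R + 2 * d, fun t ht => ?_⟩, fun x hx => ?_⟩
  · filter_upwards [Iio_mem_nhds (half_pos hd)] with t ht
    simp only [G, hφ0 t (by rw [abs_sub_comm, abs_of_pos] <;> linarith [Set.mem_Iio.mp ht]),
      zero_smul, Pi.zero_apply]
  · simp only [G, hφ0 t (by rw [abs_of_pos] <;> linarith), zero_smul]
  · rw [show g x - G x = (1 - φ x) • g x by simp [G, max_eq_left hx, sub_smul]]
    by_cases hmid : d ≤ x ∧ x < N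
    · simpa [hφ1 x hmid.1 hmid.2.le] using hε
    have hgx : ‖g x‖ < ε := by
      rcases lt_or_ge x d with hxd | hxd
      · exact hsmall ⟨hx, hxd⟩
      · exact hlarge x (not_lt.mp fun h => hmid ⟨hxd, h⟩)
    calc ‖(1 - φ x) • g x‖ = |1 - φ x| * ‖g x‖ := by rw [norm_smul, Real.norm_eq_abs]
      _ ≤ 1 * ‖g x‖ := by
          gcongr; rw [abs_le]; constructor <;> linarith [φ.nonneg (x := x), φ.le_one (x := x)]
      _ < ε := by rwa [one_mul]

lemma continuous_div_ofReal {G : ℝ → ℂ} (hG : Continuous G) (hG0 : G =ᶠ[𝓝 0] 0) :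
    Continuous fun t => G t / t := by
  refine continuous_iff_continuousAt.mpr fun t => ?_
  rcases eq_or_ne t 0 with rfl | ht
  · exact (continuousAt_const (y := (0 : ℂ))).congr (hG0.mono fun s hs => by simp [hs])
  · exact hG.continuousAt.div Complex.continuous_ofReal.continuousAt (by exact_mod_cast ht)

noncomputable def oneSubCesInv (G : ℝ → ℂ) (x : ℝ) : ℂ := G x + ∫ t in (0:ℝ)..x, G t / t

section OneSubCesInv

variable {G : ℝ → ℂ} (hG : Continuous G) (hG0 : G =ᶠ[𝓝 0] 0)
include hG hG0

lemma continuous_integral_div_ofReal : Continuous fun x => ∫ t in (0:ℝ)..x, G t / t :=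
  intervalIntegral.continuous_primitive
    (fun _ _ => (continuous_div_ofReal hG hG0).intervalIntegrable _ _) 0

lemma continuous_oneSubCesInv : Continuous (oneSubCesInv G) :=
  hG.add (continuous_integral_div_ofReal hG hG0)

lemma integral_oneSubCesInv (x : ℝ) :
    ∫ s in (0:ℝ)..x, oneSubCesInv G s = x * ∫ t in (0:ℝ)..x, G t / t := by
  have hq := continuous_div_ofReal hG hG0
  have hGq : ∀ t : ℝ, (t : ℂ) * (G t / t) = G t := fun t => by
    rcases eq_or_ne t 0 with rfl | ht
    · simp [hG0.eq_of_nhds]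
    · exact mul_div_cancel₀ _ (by exact_mod_cast ht)
  have hparts := intervalIntegral.integral_mul_deriv_eq_deriv_mul (a := 0) (b := x)
    (u := fun t : ℝ => (t : ℂ)) (u' := fun _ => 1) (fun t _ => (hasDerivAt_id t).ofReal_comp)
    (fun t _ => (hq.integral_hasStrictDerivAt 0 t).hasDerivAt)
    intervalIntegrable_const (hq.intervalIntegrable _ _)
  simp only [hGq, one_mul, Complex.ofReal_zero, zero_mul, sub_zero] at hparts
  unfold oneSubCesInv
  rw [intervalIntegral.integral_add (hG.intervalIntegrable _ _)
    ((continuous_integral_div_ofReal hG hG0).intervalIntegrable _ _), hparts]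
  ring

lemma oneSubCesInv_sub_ces (x : ℝ) : oneSubCesInv G x - ces (oneSubCesInv G) x = G x := by
  rcases eq_or_ne x 0 with rfl | hx
  · rw [ces_zero, sub_self, hG0.eq_of_nhds, Pi.zero_apply]
  · rw [ces, if_neg hx, integral_oneSubCesInv hG hG0,
      mul_div_cancel_left₀ _ (by exact_mod_cast hx), oneSubCesInv, add_sub_cancel_right]

lemma tendsto_oneSubCesInv_atTop {b : ℝ} (hGb : ∀ t ≥ b, G t = 0) :
    Tendsto (oneSubCesInv G) atTop (𝓝 (∫ t in (0:ℝ)..b, G t / t)) := by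
  have hq := continuous_div_ofReal hG hG0
  refine tendsto_const_nhds.congr' ?_
  filter_upwards [eventually_ge_atTop b] with x hx
  have htail : ∫ t in b..x, G t / t = 0 := by
    rw [← intervalIntegral.integral_zero (a := b) (b := x) (E := ℂ)]
    refine intervalIntegral.integral_congr fun t ht => ?_
    rw [Set.uIcc_of_le hx] at ht
    simp [hGb t ht.1]
  rw [oneSubCesInv, hGb x hx, zero_add, ← intervalIntegral.integral_add_adjacent_intervals
    (hq.intervalIntegrable 0 b) (hq.intervalIntegrable b x), htail, add_zero]

end OneSubCesInv

/-- The closure of the range of `I - C` on `C_l([0,∞])` is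
`{f ∈ C_l([0,∞]) : f(0) = f(∞) = 0}`: a function `g ∈ C_l([0,∞])` with limit `L` at
infinity satisfies `g 0 = 0 ∧ L = 0` iff it is uniformly approximable by elements
`f - C f` with `f ∈ C_l([0,∞])`. -/
theorem cesaro_Cl_range_closure (g : ℝ → ℂ) (hg : ContinuousOn g (Set.Ici 0))
    (L : ℂ) (hlim : Filter.Tendsto g Filter.atTop (nhds L)) :
    (g 0 = 0 ∧ L = 0) ↔
      ∀ ε > (0:ℝ), ∃ f : ℝ → ℂ, ContinuousOn f (Set.Ici 0) ∧
        (∃ M : ℂ, Filter.Tendsto f Filter.atTop (nhds M)) ∧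
        ∀ x ∈ Set.Ici (0:ℝ), ‖g x - (f x - ces f x)‖ < ε := by
  constructor
  · rintro ⟨hg0, rfl⟩ ε hε
    obtain ⟨G, hG, hG0, ⟨b, hGb⟩, hgG⟩ := exists_cutoff_approx hg hg0 hlim hε
    refine ⟨oneSubCesInv G, (continuous_oneSubCesInv hG hG0).continuousOn,
      ⟨_, tendsto_oneSubCesInv_atTop hG hG0 hGb⟩, fun x hx => ?_⟩
    rw [oneSubCesInv_sub_ces hG hG0]
    exact hgG x hx
  · intro happrox
    have hsmall : ∀ ε > 0, ‖g 0‖ ≤ ε ∧ ‖L‖ ≤ ε := by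
      intro ε hε
      obtain ⟨f, hf, ⟨M, hM⟩, hfg⟩ := happrox ε hε
      have hlim' : Tendsto (fun x => g x - (f x - ces f x)) atTop (𝓝 (L - (M - M))) :=
        hlim.sub (hM.sub (tendsto_ces_atTop hf hM))
      rw [sub_self, sub_zero] at hlim'
      refine ⟨by simpa [ces_zero] using (hfg 0 Set.self_mem_Ici).le, le_of_tendsto hlim'.norm ?_⟩
      filter_upwards [eventually_ge_atTop 0] with x hx using (hfg x hx).le
    exact ⟨norm_le_zero_iff.mp (le_of_forall_pos_le_add fun ε hε => by simpa using (hsmall ε hε).1),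
      norm_le_zero_iff.mp (le_of_forall_pos_le_add fun ε hε => by simpa using (hsmall ε hε).2)⟩
end
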